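/- Let S be a unital epsilon-strongly G-graded ring and r, s two distinct epsilon-central elements of B(E_G)*. Then rs = 0, and (rS)_N ⊕ (sS)_N is a strongly N-graded ring with identity r + s, where N = N(r) ∩ N(s). -/

import Mathlib

open Pointwise

section Defs

variable {G : Type} [AddGroup G] [DecidableEq G]
variable {A : Type} [Ring A]
variable {M : Type} [AddCommGroup M] [Module A M]

/-- The additive subgroup of `M` consisting of finite sums of products `a • m`
with `a ∈ S` and `m ∈ N`. -/
def prodSMul (S : AddSubgroup A) (N : AddSubgroup M) : AddSubgroup M where
  __ := S.toAddSubmonoid • N.toAddSubmonoid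
  neg_mem' {x} hx := by
    refine AddSubmonoid.smul_induction_on hx (fun a ha m hm => ?_) (fun x y hx hy => ?_)
    · rw [show -(a • m) = (-a) • m by rw [neg_smul]]
      exact AddSubmonoid.smul_mem_smul (S.neg_mem ha) hm
    · rw [neg_add]
      exact (S.toAddSubmonoid • N.toAddSubmonoid).add_mem hx hy

/-- A (possibly non-unital) ring, here an additive subgroup of `A` closed under
multiplication, is *s-unital* if every element has a left and a right local unit in it. -/
def IsSUnitalSub (I : AddSubgroup A) : Prop :=
  ∀ a ∈ I, ∃ u ∈ I, ∃ v ∈ I, u * a = a ∧ a * v = a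

variable (𝒜 : G → AddSubgroup A)

/-- `S` is symmetrically graded if `S_g S_{g⁻¹} S_g = S_g` for all `g`. -/
def IsSymmetricallyGraded : Prop := ∀ g : G, 𝒜 g * 𝒜 (-g) * 𝒜 g = 𝒜 g

/-- `S` is nearly epsilon-strongly graded if each `S_g` is an s-unital
`(S_g S_{g⁻¹}, S_{g⁻¹} S_g)`-bimodule: for every `s ∈ S_g` there are
`u ∈ S_g S_{g⁻¹}` and `v ∈ S_{g⁻¹} S_g` with `u s = s = s v`. -/
def IsNearlyEpsilonStrong : Prop :=
  ∀ g : G, ∀ s ∈ 𝒜 g, ∃ u ∈ 𝒜 g * 𝒜 (-g), ∃ v ∈ 𝒜 (-g) * 𝒜 g, u * s = s ∧ s * v = s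


section EpsilonCentral

variable {G : Type} [AddGroup G] [DecidableEq G]
variable {A : Type} [Ring A]

/-- `r` is an epsilon-central element for the family `ε`: a minimal nonzero element of
the boolean semigroup generated by `{ε_g : g ∈ G}` that is central in `S`. -/
def IsEpsilonCentral (ε : G → A) (r : A) : Prop :=
  r ∈ Subsemigroup.closure (Set.range ε) ∧ r ≠ 0 ∧
    (∀ a ∈ Subsemigroup.closure (Set.range ε), a ≠ 0 → a * r = a → a = r) ∧
    ∀ x : A, r * x = x * r

/-- The image `e S_g` of a homogeneous component under left multiplication by `e`. -/
def cornerComponent (e : A) (S : AddSubgroup A) : AddSubgroup A :=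
  S.map (AddMonoidHom.mulLeft e)

end EpsilonCentral

end Defs

/-!
The `ε_g` are idempotents of `S_0` commuting with all of `S_0`: for `a ∈ S_0` both `ε_g a` and
`a ε_g` lie in `S_g S_{-g}`, on which `ε_g` is a two-sided unit, so `a ε_g = ε_g a ε_g = ε_g a`.
Hence the semigroup generated by the `ε_g` consists of commuting idempotents, and for distinct
minimal elements `r, s` the product `rs` lies below both, which forces `rs = 0`. Then `e = r + s`
is a central idempotent with `e ε_g = e` for `g ∈ N`, so `eS_g · eS_h = e S_g S_h ⊆ e S_{g+h}`,
and conversely `e S_{g+h} = e ε_g S_{g+h} ⊆ e S_g (S_{-g} S_{g+h}) ⊆ eS_g · eS_h`.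
-/

namespace AddSubgroup

variable {A : Type*} [Ring A] {I J K : AddSubgroup A} {e x : A}

theorem mul_mem_mul {a b : A} (ha : a ∈ I) (hb : b ∈ J) : a * b ∈ I * J :=
  AddSubmonoid.mul_mem_mul ha hb

@[elab_as_elim]
protected theorem mul_induction_on {C : A → Prop} (hx : x ∈ I * J)
    (mul : ∀ a ∈ I, ∀ b ∈ J, C (a * b)) (add : ∀ x y, C x → C y → C (x + y)) : C x :=
  AddSubmonoid.mul_induction_on hx mul add

theorem mul_le : I * J ≤ K ↔ ∀ a ∈ I, ∀ b ∈ J, a * b ∈ K :=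
  AddSubmonoid.mul_le

theorem unit_mul_eq_of_mem_mul (he : ∀ a ∈ I, e * a = a) (hx : x ∈ I * J) : e * x = x :=
  AddSubgroup.mul_induction_on hx (fun a ha b _ => by rw [← mul_assoc, he a ha])
    fun _ _ hx hy => by rw [mul_add, hx, hy]

theorem mul_unit_eq_of_mem_mul (he : ∀ b ∈ J, b * e = b) (hx : x ∈ I * J) : x * e = x :=
  AddSubgroup.mul_induction_on hx (fun a _ b hb => by rw [mul_assoc, he b hb])
    fun _ _ hx hy => by rw [add_mul, hx, hy]

theorem mul_mem_mul_left (hI : ∀ a ∈ I, e * a ∈ I) (hx : x ∈ I * J) : e * x ∈ I * J :=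
  AddSubgroup.mul_induction_on hx
    (fun a ha b hb => by rw [← mul_assoc]; exact mul_mem_mul (hI a ha) hb)
    fun _ _ hx hy => by rw [mul_add]; exact add_mem hx hy

theorem mul_mem_mul_right (hJ : ∀ b ∈ J, b * e ∈ J) (hx : x ∈ I * J) : x * e ∈ I * J :=
  AddSubgroup.mul_induction_on hx
    (fun a ha b hb => by rw [mul_assoc]; exact mul_mem_mul ha (hJ b hb))
    fun _ _ hx hy => by rw [add_mul]; exact add_mem hx hy

end AddSubgroup

namespace Subsemigroup

variable {M : Type*} [Semigroup M] {s : Set M} {a b : M}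

theorem commute_of_mem_closure (hcomm : ∀ x ∈ s, ∀ y ∈ s, Commute x y)
    (ha : a ∈ closure s) (hb : b ∈ closure s) : Commute a b :=
  Set.centralizer_centralizer_comm_of_comm hcomm a (closure_le_centralizer_centralizer s ha) b
    (closure_le_centralizer_centralizer s hb)

theorem isIdempotentElem_of_mem_closure (hcomm : ∀ x ∈ s, ∀ y ∈ s, Commute x y)
    (hidem : ∀ x ∈ s, IsIdempotentElem x) (ha : a ∈ closure s) : IsIdempotentElem a := by
  induction ha using closure_induction with
  | mem x hx => exact hidem x hx
  | mul x y hx hy ihx ihy => exact .mul_of_commute (commute_of_mem_closure hcomm hx hy) ihx ihy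

end Subsemigroup

theorem IsIdempotentElem.mul_mul_mul_of_commute {A : Type*} [Semigroup A] {e a : A}
    (he : IsIdempotentElem e) (hea : Commute e a) (b : A) : e * a * (e * b) = e * (a * b) := by
  rw [mul_assoc, ← mul_assoc a, ← hea.eq, mul_assoc, ← mul_assoc e, he.eq]

theorem IsEpsilonCentral.commute {G A : Type} [Ring A] {ε : G → A} {r : A}
    (hr : IsEpsilonCentral ε r) (x : A) : Commute r x :=
  hr.2.2.2 x

section Graded

variable {G : Type} [AddGroup G] {A : Type} [Ring A] {𝒜 : G → AddSubgroup A} {ε : G → A}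

theorem epsilon_mul_eq_of_mem_mul (hunit : ∀ g : G, ∀ s ∈ 𝒜 g, ε g * s = s ∧ s * ε (-g) = s)
    {g : G} {x : A} (hx : x ∈ 𝒜 g * 𝒜 (-g)) : ε g * x = x :=
  AddSubgroup.unit_mul_eq_of_mem_mul (fun a ha => (hunit g a ha).1) hx

theorem mul_epsilon_eq_of_mem_mul (hunit : ∀ g : G, ∀ s ∈ 𝒜 g, ε g * s = s ∧ s * ε (-g) = s)
    {g : G} {x : A} (hx : x ∈ 𝒜 g * 𝒜 (-g)) : x * ε g = x :=
  AddSubgroup.mul_unit_eq_of_mem_mul (fun b hb => by simpa using (hunit (-g) b hb).2) hx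

variable [SetLike.GradedMonoid 𝒜]

theorem graded_mul_le (g h : G) : 𝒜 g * 𝒜 h ≤ 𝒜 (g + h) :=
  AddSubgroup.mul_le.2 fun _ ha _ hb => SetLike.mul_mem_graded ha hb

theorem epsilon_mem_zero (hmem : ∀ g : G, ε g ∈ 𝒜 g * 𝒜 (-g)) (g : G) : ε g ∈ 𝒜 0 := by
  simpa using graded_mul_le g (-g) (hmem g)

theorem commute_epsilon_of_mem_zero (hmem : ∀ g : G, ε g ∈ 𝒜 g * 𝒜 (-g))
    (hunit : ∀ g : G, ∀ s ∈ 𝒜 g, ε g * s = s ∧ s * ε (-g) = s) {a : A} (ha : a ∈ 𝒜 0)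
    (g : G) : Commute a (ε g) := by
  have hεa : ε g * a ∈ 𝒜 g * 𝒜 (-g) :=
    AddSubgroup.mul_mem_mul_right (fun b hb => by simpa using SetLike.mul_mem_graded hb ha)
      (hmem g)
  have haε : a * ε g ∈ 𝒜 g * 𝒜 (-g) :=
    AddSubgroup.mul_mem_mul_left (fun b hb => by simpa using SetLike.mul_mem_graded ha hb)
      (hmem g)
  calc a * ε g = ε g * (a * ε g) := (epsilon_mul_eq_of_mem_mul hunit haε).symm
    _ = ε g * a * ε g := (mul_assoc _ _ _).symm
    _ = ε g * a := mul_epsilon_eq_of_mem_mul hunit hεa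

theorem isIdempotentElem_of_mem_closure_range_epsilon (hmem : ∀ g : G, ε g ∈ 𝒜 g * 𝒜 (-g))
    (hunit : ∀ g : G, ∀ s ∈ 𝒜 g, ε g * s = s ∧ s * ε (-g) = s) {a : A}
    (ha : a ∈ Subsemigroup.closure (Set.range ε)) : IsIdempotentElem a := by
  refine Subsemigroup.isIdempotentElem_of_mem_closure ?_ ?_ ha
  · rintro _ ⟨g, rfl⟩ _ ⟨h, rfl⟩
    exact commute_epsilon_of_mem_zero hmem hunit (epsilon_mem_zero hmem g) h
  · rintro _ ⟨g, rfl⟩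
    exact epsilon_mul_eq_of_mem_mul hunit (hmem g)

theorem IsEpsilonCentral.mul_eq_zero_of_ne (hmem : ∀ g : G, ε g ∈ 𝒜 g * 𝒜 (-g))
    (hunit : ∀ g : G, ∀ s ∈ 𝒜 g, ε g * s = s ∧ s * ε (-g) = s) {r s : A}
    (hr : IsEpsilonCentral ε r) (hs : IsEpsilonCentral ε s) (hrs : r ≠ s) : r * s = 0 := by
  obtain ⟨hr_mem, -, hr_min, -⟩ := hr
  obtain ⟨hs_mem, -, hs_min, hs_central⟩ := hs
  have hr_idem := isIdempotentElem_of_mem_closure_range_epsilon hmem hunit hr_mem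
  have hs_idem := isIdempotentElem_of_mem_closure_range_epsilon hmem hunit hs_mem
  by_contra hne
  have hrs_mem : r * s ∈ Subsemigroup.closure (Set.range ε) := mul_mem hr_mem hs_mem
  have hrs_eq_r : r * s = r :=
    hr_min _ hrs_mem hne (by rw [mul_assoc, hs_central, ← mul_assoc, hr_idem.eq])
  have hrs_eq_s : r * s = s := hs_min _ hrs_mem hne (by rw [mul_assoc, hs_idem.eq])
  exact hrs (hrs_eq_r.symm.trans hrs_eq_s)

variable {e : A}

theorem cornerComponent_mul_le (he : IsIdempotentElem e) (he_central : ∀ x, Commute e x)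
    (g h : G) :
    cornerComponent e (𝒜 g) * cornerComponent e (𝒜 h) ≤ cornerComponent e (𝒜 (g + h)) := by
  refine AddSubgroup.mul_le.2 ?_
  rintro _ ⟨a, ha, rfl⟩ _ ⟨b, hb, rfl⟩
  exact ⟨a * b, SetLike.mul_mem_graded ha hb, (he.mul_mul_mul_of_commute (he_central a) b).symm⟩

theorem le_cornerComponent_mul (he : IsIdempotentElem e) (he_central : ∀ x, Commute e x)
    {g : G} {x : A} (hx : x ∈ 𝒜 g * 𝒜 (-g)) (hex : e * x = e) (h : G) :
    cornerComponent e (𝒜 (g + h)) ≤ cornerComponent e (𝒜 g) * cornerComponent e (𝒜 h) := by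
  rintro _ ⟨c, hc, rfl⟩
  have hec : e * c = e * (x * c) := by rw [← mul_assoc, hex]
  change e * c ∈ _
  rw [hec]
  refine AddSubgroup.mul_induction_on hx (fun u hu v hv => ?_) fun y z hy hz => ?_
  · have hvc : v * c ∈ 𝒜 h := by simpa using SetLike.mul_mem_graded hv hc
    rw [mul_assoc, ← he.mul_mul_mul_of_commute (he_central u)]
    exact AddSubgroup.mul_mem_mul ⟨u, hu, rfl⟩ ⟨v * c, hvc, rfl⟩
  · rw [add_mul, mul_add]
    exact add_mem hy hz

theorem cornerComponent_mul (he : IsIdempotentElem e) (he_central : ∀ x, Commute e x)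
    {g : G} {x : A} (hx : x ∈ 𝒜 g * 𝒜 (-g)) (hex : e * x = e) (h : G) :
    cornerComponent e (𝒜 g) * cornerComponent e (𝒜 h) = cornerComponent e (𝒜 (g + h)) :=
  le_antisymm (cornerComponent_mul_le he he_central g h)
    (le_cornerComponent_mul he he_central hx hex h)

end Graded

/-- If `r ≠ s` are epsilon-central elements, then `r s = 0` and
`(rS)_N ⊕ (sS)_N = ⊕_{g ∈ N} (r + s) S_g` is strongly `N`-graded with identity
`r + s`, where `N = N(r) ∩ N(s)`. -/
theorem orthogonal_and_sum_strongly_graded_of_epsilonCentral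
    {G : Type} [AddGroup G] [DecidableEq G]
    {A : Type} [Ring A] (𝒜 : G → AddSubgroup A) [GradedRing 𝒜]
    (ε : G → A)
    (hmem : ∀ g : G, ε g ∈ 𝒜 g * 𝒜 (-g))
    (hunit : ∀ g : G, ∀ s ∈ 𝒜 g, ε g * s = s ∧ s * ε (-g) = s)
    (r s : A) (hr : IsEpsilonCentral ε r) (hs : IsEpsilonCentral ε s) (hrs : r ≠ s) :
    r * s = 0 ∧
      ∀ g h : G, r * ε g = r → s * ε g = s → r * ε h = r → s * ε h = s →
        cornerComponent (r + s) (𝒜 g) * cornerComponent (r + s) (𝒜 h)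
          = cornerComponent (r + s) (𝒜 (g + h)) := by
  have hrs0 : r * s = 0 := hr.mul_eq_zero_of_ne hmem hunit hs hrs
  refine ⟨hrs0, fun g h hrg hsg _ _ => ?_⟩
  have he_central : ∀ x, Commute (r + s) x := fun x => (hr.commute x).add_left (hs.commute x)
  have he : IsIdempotentElem (r + s) :=
    (isIdempotentElem_of_mem_closure_range_epsilon hmem hunit hr.1).add
      (isIdempotentElem_of_mem_closure_range_epsilon hmem hunit hs.1)
      (by rw [hrs0, (hs.commute r).eq, hrs0, add_zero])
  exact cornerComponent_mul he he_central (hmem g) (by rw [add_mul, hrg, hsg]) h
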